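/- Let {(σ_n, v_n, u_n)}_{n∈ℕ} be a singular system for the compact linear operator K : X → Y. Let y ∈ Y, α > 0, and suppose c(α) > 0 satisfies c(α) σ_n ≥ 4/3 for every n such that |σ_n^{1/3} ⟨y, u_n⟩| > (3/4) α^{2/3}. Then ∑_n ( H_{α,σ_n}(σ_n^{1/3} ⟨y, u_n⟩) )² ≤ c(α)² ‖y‖²; in particular the series R_α y = ∑_n H_{α,σ_n}(σ_n^{1/3} ⟨y, u_n⟩) v_n converges in X and ‖R_α y‖ ≤ c(α) ‖y‖. -/
import Mathlib


open scoped InnerProductSpace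

/-- The half thresholding function `H_{α,σ}`. -/
noncomputable def halfThresh (α σ t : ℝ) : ℝ :=
  if |t| ≤ 3 / 4 * α ^ ((2 : ℝ) / 3) then 0
  else 2 / (3 * σ ^ ((4 : ℝ) / 3)) * t *
    (1 + Real.cos (2 / 3 * Real.pi -
      2 / 3 * Real.arccos (α / 8 * (|t| / 3) ^ (-(3 : ℝ) / 2))))

lemma halfThresh_abs_le {α σc t c : ℝ} (hσ : 0 < σc)
    (h : ¬ |t| ≤ 3 / 4 * α ^ ((2 : ℝ) / 3) → 4 / 3 ≤ c * σc) (hc : 0 ≤ c) :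
    |halfThresh α σc t| ≤ c * σc ^ (-(1 : ℝ) / 3) * |t| := by
  unfold halfThresh
  split_ifs with ht
  · rw [abs_zero]; positivity
  · have hσ43 : (0:ℝ) < σc ^ ((4 : ℝ) / 3) := Real.rpow_pos_of_pos hσ _
    have hcσ := h ht
    have hcos : |1 + Real.cos (2 / 3 * Real.pi -
        2 / 3 * Real.arccos (α / 8 * (|t| / 3) ^ (-(3 : ℝ) / 2)))| ≤ 2 := by
      have h1 := Real.neg_one_le_cos (2 / 3 * Real.pi -
        2 / 3 * Real.arccos (α / 8 * (|t| / 3) ^ (-(3 : ℝ) / 2)))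
      have h2 := Real.cos_le_one (2 / 3 * Real.pi -
        2 / 3 * Real.arccos (α / 8 * (|t| / 3) ^ (-(3 : ℝ) / 2)))
      rw [abs_le]; constructor <;> linarith
    calc |2 / (3 * σc ^ ((4 : ℝ) / 3)) * t *
          (1 + Real.cos (2 / 3 * Real.pi -
            2 / 3 * Real.arccos (α / 8 * (|t| / 3) ^ (-(3 : ℝ) / 2))))|
        = 2 / (3 * σc ^ ((4 : ℝ) / 3)) * |t| *
          |1 + Real.cos (2 / 3 * Real.pi -
            2 / 3 * Real.arccos (α / 8 * (|t| / 3) ^ (-(3 : ℝ) / 2)))| := by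
          rw [abs_mul, abs_mul]
          congr 2
          rw [abs_of_pos (by positivity)]
      _ ≤ 2 / (3 * σc ^ ((4 : ℝ) / 3)) * |t| * 2 := by
          apply mul_le_mul_of_nonneg_left hcos (by positivity)
      _ = 4 / (3 * σc) * (σc ^ (-(1 : ℝ) / 3) * |t|) := by
          have : σc ^ ((4 : ℝ) / 3) = σc * σc ^ ((1 : ℝ) / 3) := by
            rw [← Real.rpow_one_add' hσ.le (by norm_num)]
            norm_num
          have h13 : σc ^ (-(1 : ℝ) / 3) = (σc ^ ((1 : ℝ) / 3))⁻¹ := by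
            rw [← Real.rpow_neg hσ.le]; norm_num
          rw [this, h13]
          field_simp
          ring
      _ ≤ c * (σc ^ (-(1 : ℝ) / 3) * |t|) := by
          apply mul_le_mul_of_nonneg_right _ (by positivity)
          rw [div_le_iff₀ (by positivity)]
          linarith
      _ = c * σc ^ (-(1 : ℝ) / 3) * |t| := by ring

/-- If `c(α) σ_n ≥ 4/3` for every `n` with `|σ_n^{1/3} ⟨y, u_n⟩| > (3/4) α^{2/3}`, then
`∑ (H_{α,σ_n}(σ_n^{1/3} ⟨y, u_n⟩))² ≤ c(α)² ‖y‖²`; in particular the series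
`R_α y = ∑ H_{α,σ_n}(σ_n^{1/3} ⟨y, u_n⟩) v_n` converges in `X` and `‖R_α y‖ ≤ c(α) ‖y‖`. -/
theorem halfSVD_bounded {X Y : Type*}
    [NormedAddCommGroup X] [InnerProductSpace ℝ X] [CompleteSpace X]
    [NormedAddCommGroup Y] [InnerProductSpace ℝ Y] [CompleteSpace Y]
    (K : X →L[ℝ] Y) (hK : IsCompactOperator K)
    (σ : ℕ → ℝ) (v : ℕ → X) (u : ℕ → Y)
    (hσ : ∀ n, 0 < σ n) (hv : Orthonormal ℝ v) (hu : Orthonormal ℝ u)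
    (hKv : ∀ n, K (v n) = σ n • u n)
    (hKadj : ∀ n, (ContinuousLinearMap.adjoint K) (u n) = σ n • v n)
    (y : Y) (α : ℝ) (hα : 0 < α)
    (c : ℝ) (hc : 0 < c)
    (hcσ : ∀ n, 3 / 4 * α ^ ((2 : ℝ) / 3) < |σ n ^ ((1 : ℝ) / 3) * ⟪y, u n⟫_ℝ|
      → 4 / 3 ≤ c * σ n) :
    Summable (fun n => halfThresh α (σ n) (σ n ^ ((1 : ℝ) / 3) * ⟪y, u n⟫_ℝ) ^ 2) ∧
    (∑' n, halfThresh α (σ n) (σ n ^ ((1 : ℝ) / 3) * ⟪y, u n⟫_ℝ) ^ 2 ≤ c ^ 2 * ‖y‖ ^ 2) ∧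
    ∃ x : X, HasSum
        (fun n => halfThresh α (σ n) (σ n ^ ((1 : ℝ) / 3) * ⟪y, u n⟫_ℝ) • v n) x ∧
      ‖x‖ ≤ c * ‖y‖ := by
  set a : ℕ → ℝ := fun n => halfThresh α (σ n) (σ n ^ ((1 : ℝ) / 3) * ⟪y, u n⟫_ℝ) with ha
  -- pointwise bound |a n| ≤ c * |⟪y, u n⟫|
  have key : ∀ n, |a n| ≤ c * |⟪y, u n⟫_ℝ| := by
    intro n
    have h1 := halfThresh_abs_le (α := α) (hσ n)
      (fun h => hcσ n (lt_of_not_ge h)) hc.le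
    refine h1.trans_eq ?_
    rw [abs_mul, abs_of_pos (Real.rpow_pos_of_pos (hσ n) _)]
    have h0 : σ n ^ (-(1:ℝ)/3) * σ n ^ ((1:ℝ)/3) = 1 := by
      rw [← Real.rpow_add (hσ n)]; norm_num
    calc c * σ n ^ (-(1:ℝ)/3) * (σ n ^ ((1:ℝ)/3) * |⟪y, u n⟫_ℝ|)
        = c * ((σ n ^ (-(1:ℝ)/3) * σ n ^ ((1:ℝ)/3)) * |⟪y, u n⟫_ℝ|) := by ring
      _ = c * |⟪y, u n⟫_ℝ| := by rw [h0, one_mul]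
  have keysq : ∀ n, a n ^ 2 ≤ c ^ 2 * ⟪y, u n⟫_ℝ ^ 2 := by
    intro n
    calc a n ^ 2 = |a n| ^ 2 := (sq_abs _).symm
      _ ≤ (c * |⟪y, u n⟫_ℝ|) ^ 2 := pow_le_pow_left₀ (abs_nonneg _) (key n) 2
      _ = c ^ 2 * ⟪y, u n⟫_ℝ ^ 2 := by rw [mul_pow, sq_abs]
  -- Bessel
  have hbes : Summable fun n => ⟪y, u n⟫_ℝ ^ 2 := by
    have := hu.inner_products_summable y
    simpa [real_inner_comm, sq_abs] using this
  have hbes2 : ∑' n, ⟪y, u n⟫_ℝ ^ 2 ≤ ‖y‖ ^ 2 := by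
    have := hu.tsum_inner_products_le y
    simpa [real_inner_comm, sq_abs] using this
  have hsum : Summable fun n => a n ^ 2 :=
    Summable.of_nonneg_of_le (fun n => sq_nonneg _) keysq (hbes.mul_left (c ^ 2))
  have htsum : ∑' n, a n ^ 2 ≤ c ^ 2 * ‖y‖ ^ 2 := by
    calc ∑' n, a n ^ 2 ≤ ∑' n, c ^ 2 * ⟪y, u n⟫_ℝ ^ 2 :=
          Summable.tsum_le_tsum keysq hsum (hbes.mul_left _)
      _ = c ^ 2 * ∑' n, ⟪y, u n⟫_ℝ ^ 2 := tsum_mul_left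
      _ ≤ c ^ 2 * ‖y‖ ^ 2 := by
          apply mul_le_mul_of_nonneg_left hbes2 (by positivity)
  refine ⟨hsum, htsum, ?_⟩
  -- summability of a n • v n via orthogonal family
  have hof := hv.orthogonalFamily
  have hsum' : Summable fun n => a n • v n := by
    have := (hof.summable_iff_norm_sq_summable a).2 (by simpa using hsum)
    simpa [LinearIsometry.toSpanSingleton_apply] using this
  obtain ⟨x, hx⟩ := hsum'
  refine ⟨x, hx, ?_⟩
  -- ‖x‖² = ∑ a n ²
  have hnorm : HasSum (fun n => a n ^ 2) (‖x‖ ^ 2) := by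
    have h1 : Filter.Tendsto (fun s : Finset ℕ => ‖∑ i ∈ s, a i • v i‖ ^ 2)
        Filter.atTop (nhds (‖x‖ ^ 2)) :=
      ((continuous_norm.pow 2).continuousAt.tendsto.comp hx)
    have h2 : (fun s : Finset ℕ => ‖∑ i ∈ s, a i • v i‖ ^ 2)
        = fun s => ∑ i ∈ s, a i ^ 2 := by
      funext s
      have := hof.norm_sum a s
      simpa [LinearIsometry.toSpanSingleton_apply, sq_abs] using this
    rw [HasSum, ← h2]
    exact h1
  have hxsq : ‖x‖ ^ 2 ≤ c ^ 2 * ‖y‖ ^ 2 := hnorm.tsum_eq ▸ htsum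
  nlinarith [norm_nonneg x, norm_nonneg y, mul_nonneg hc.le (norm_nonneg y)]
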